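/- Let (u,v,w) be a G₂-frame in ℝ⁷ (orthonormal with φ₀(u,v,w)=0), R = χ(u,v,w), R′ = (u×v+v×w+w×u)/√3, R″ = (u+v+w)/√3. Then for all real a, b, c with a+b+c = 0: √3 R″×(au+bv+cw) = (b−a)(u×v) + (c−b)(v×w) + (a−c)(w×u); moreover R″×R = R′. -/

import Mathlib

open scoped RealInnerProductSpace

noncomputable section

/-- ℝ⁷ with its Euclidean inner product. -/
abbrev V7 := EuclideanSpace ℝ (Fin 7)

/-- The standard G₂ 3-form φ₀ = e¹²³+e¹⁴⁵+e¹⁶⁷+e²⁴⁶−e²⁵⁷−e³⁴⁷−e³⁵⁶ on ℝ⁷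
(indices shifted to 0-based), written as a trilinear alternating function. -/
def phi0 : (Fin 3 → V7) → ℝ := fun v =>
  let m : Fin 7 → Fin 7 → Fin 7 → ℝ := fun i j k =>
    Matrix.det !![v 0 i, v 0 j, v 0 k; v 1 i, v 1 j, v 1 k; v 2 i, v 2 j, v 2 k]
  m 0 1 2 + m 0 3 4 + m 0 5 6 + m 1 3 5 - m 1 4 6 - m 2 3 6 - m 2 4 5

/-- The 4-form ∗φ₀ = e⁴⁵⁶⁷+e²³⁶⁷+e²³⁴⁵+e¹³⁵⁷−e¹³⁴⁶−e¹²⁵⁶−e¹²⁴⁷ (0-based indices). -/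
def starPhi0 : (Fin 4 → V7) → ℝ := fun v =>
  let m : Fin 7 → Fin 7 → Fin 7 → Fin 7 → ℝ := fun i j k l =>
    Matrix.det !![v 0 i, v 0 j, v 0 k, v 0 l; v 1 i, v 1 j, v 1 k, v 1 l;
                  v 2 i, v 2 j, v 2 k, v 2 l; v 3 i, v 3 j, v 3 k, v 3 l]
  m 3 4 5 6 + m 1 2 5 6 + m 1 2 3 4 + m 0 2 4 6 - m 0 2 3 5 - m 0 1 4 5 - m 0 1 3 6

/-- The cross product on ℝ⁷: the unique vector with ⟨u×v, z⟩ = φ₀(u,v,z) for all z. -/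
def cross (u v : V7) : V7 := WithLp.toLp 2 (fun i => phi0 ![u, v, EuclideanSpace.single i 1])

/-- The triple cross product χ: the unique vector with ⟨χ(u,v,w), z⟩ = ∗φ₀(u,v,w,z). -/
def chi (u v w : V7) : V7 := WithLp.toLp 2 (fun i => starPhi0 ![u, v, w, EuclideanSpace.single i 1])

/-- Interior product ξ⌟α : contraction of a (k+1)-form with ξ in its first slot. -/
def iprod {k : ℕ} (ξ : V7) (α : (Fin (k + 1) → V7) → ℝ) : (Fin k → V7) → ℝ :=
  fun v => α (Fin.cons ξ v)

/-- Wedge product of alternating forms (determinant convention). -/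
def wedge {p q : ℕ} (α : (Fin p → V7) → ℝ) (β : (Fin q → V7) → ℝ) :
    (Fin (p + q) → V7) → ℝ := fun v =>
  (1 / ((p.factorial : ℝ) * q.factorial)) *
    ∑ σ : Equiv.Perm (Fin (p + q)), ((Equiv.Perm.sign σ : ℤ) : ℝ) *
      α (fun i => v (σ (Fin.castAdd q i))) * β (fun j => v (σ (Fin.natAdd p j)))

/-- The dual covector ξ^# = ⟨ξ,·⟩, as a 1-form. -/
def dualCov (ξ : V7) : (Fin 1 → V7) → ℝ := fun v => ⟪ξ, v 0⟫

/-- The standard volume form e¹∧⋯∧e⁷ on ℝ⁷. -/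
def vol7 : (Fin 7 → V7) → ℝ := fun v => Matrix.det (Matrix.of fun i j => v i j)

/-! The first identity only uses that `×` is bilinear and alternating. For the second, the
identity `χ(x, y, z) = ⟪x, z⟫ y - ⟪x, y⟫ z - x × (y × z)` turns `χ(u, v, w)` into `-u × (v × w)`
on a G₂-frame; since `v × w ⟂ u` (this is `φ₀(u, v, w) = 0`) and `u × (u × t) = -t` for
`t ⟂ u`, we get `u × χ(u, v, w) = v × w`. As `χ` and `φ₀` are invariant under cyclic
permutations, likewise `v × χ = w × u` and `w × χ = u × v`, and summing gives `R″ × R = R′`. -/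

theorem Matrix.det_fin_four {R : Type*} [CommRing R] (A : Matrix (Fin 4) (Fin 4) R) :
    A.det =
      A 0 0 * (A 1 1 * (A 2 2 * A 3 3 - A 2 3 * A 3 2) - A 1 2 * (A 2 1 * A 3 3 - A 2 3 * A 3 1)
        + A 1 3 * (A 2 1 * A 3 2 - A 2 2 * A 3 1))
      - A 0 1 * (A 1 0 * (A 2 2 * A 3 3 - A 2 3 * A 3 2) - A 1 2 * (A 2 0 * A 3 3 - A 2 3 * A 3 0)
        + A 1 3 * (A 2 0 * A 3 2 - A 2 2 * A 3 0))
      + A 0 2 * (A 1 0 * (A 2 1 * A 3 3 - A 2 3 * A 3 1) - A 1 1 * (A 2 0 * A 3 3 - A 2 3 * A 3 0)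
        + A 1 3 * (A 2 0 * A 3 1 - A 2 1 * A 3 0))
      - A 0 3 * (A 1 0 * (A 2 1 * A 3 2 - A 2 2 * A 3 1) - A 1 1 * (A 2 0 * A 3 2 - A 2 2 * A 3 0)
        + A 1 2 * (A 2 0 * A 3 1 - A 2 1 * A 3 0)) := by
  rw [Matrix.det_succ_row_zero, Fin.sum_univ_four]
  simp only [Matrix.det_fin_three, Matrix.submatrix_apply, Nat.succ_eq_add_one, Nat.reduceAdd,
    Fin.isValue, Fin.coe_ofNat_eq_mod, Nat.zero_mod, pow_zero, one_mul, Fin.succ_zero_eq_one,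
    Fin.succAbove, Fin.castSucc_zero, lt_self_iff_false, ↓reduceIte, Fin.succ_one_eq_two,
    Fin.castSucc_one, not_lt_zero, Fin.reduceSucc, Fin.reduceCastSucc, Nat.one_mod, pow_one,
    neg_mul, zero_lt_one, Fin.lt_one_iff, Fin.reduceEq, Nat.reduceMod, even_two, Even.neg_pow,
    one_pow, Fin.reduceLT, Nat.mod_succ]
  ring

namespace G2

theorem cross_apply (x y : V7) :
    cross x y = !₂[x 1 * y 2 - x 2 * y 1 + x 3 * y 4 - x 4 * y 3 + x 5 * y 6 - x 6 * y 5,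
      - x 0 * y 2 + x 2 * y 0 + x 3 * y 5 - x 5 * y 3 - x 4 * y 6 + x 6 * y 4,
      x 0 * y 1 - x 1 * y 0 - x 3 * y 6 + x 6 * y 3 - x 4 * y 5 + x 5 * y 4,
      - x 0 * y 4 + x 4 * y 0 - x 1 * y 5 + x 5 * y 1 + x 2 * y 6 - x 6 * y 2,
      x 0 * y 3 - x 3 * y 0 + x 1 * y 6 - x 6 * y 1 + x 2 * y 5 - x 5 * y 2,
      - x 0 * y 6 + x 6 * y 0 + x 1 * y 3 - x 3 * y 1 - x 2 * y 4 + x 4 * y 2,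
      x 0 * y 5 - x 5 * y 0 - x 1 * y 4 + x 4 * y 1 - x 2 * y 3 + x 3 * y 2] := by
  ext i; fin_cases i <;> simp [cross, phi0, Matrix.det_fin_three, PiLp.single_apply] <;> ring

theorem cross_add_left (x x' y : V7) : cross (x + x') y = cross x y + cross x' y := by
  ext i; fin_cases i <;> simp [cross_apply] <;> ring

theorem cross_add_right (x y y' : V7) : cross x (y + y') = cross x y + cross x y' := by
  ext i; fin_cases i <;> simp [cross_apply] <;> ring

theorem cross_smul_left (r : ℝ) (x y : V7) : cross (r • x) y = r • cross x y := by
  ext i; fin_cases i <;> simp [cross_apply] <;> ring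

theorem cross_smul_right (r : ℝ) (x y : V7) : cross x (r • y) = r • cross x y := by
  ext i; fin_cases i <;> simp [cross_apply] <;> ring

theorem cross_neg_right (x y : V7) : cross x (-y) = -cross x y := by
  simpa using cross_smul_right (-1) x y

theorem cross_anticomm (x y : V7) : cross y x = -cross x y := by
  ext i; fin_cases i <;> simp [cross_apply] <;> ring

theorem cross_self (x : V7) : cross x x = 0 := by
  ext i; fin_cases i <;> simp [cross_apply] <;> ring

theorem inner_cross_right (x y z : V7) : ⟪x, cross y z⟫ = phi0 ![x, y, z] := by
  simp only [cross_apply, phi0, Matrix.det_fin_three, PiLp.inner_apply, RCLike.inner_apply,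
    Real.ringHom_apply, Fin.sum_univ_seven, Matrix.of_apply, Matrix.cons_val', Matrix.cons_val,
    Matrix.cons_val_zero, Matrix.cons_val_one, Matrix.cons_val_fin_one, Fin.isValue]
  ring

theorem cross_cross_self (x y : V7) : cross x (cross x y) = ⟪x, y⟫ • x - ‖x‖ ^ 2 • y := by
  ext i; fin_cases i <;>
    simp [cross_apply, PiLp.inner_apply, EuclideanSpace.norm_sq_eq, Fin.sum_univ_seven] <;> ring

theorem chi_eq_cross_cross (x y z : V7) :
    chi x y z = ⟪x, z⟫ • y - ⟪x, y⟫ • z - cross x (cross y z) := by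
  ext i; fin_cases i <;>
    simp [chi, starPhi0, Matrix.det_fin_four, cross_apply, PiLp.single_apply, PiLp.inner_apply,
      Fin.sum_univ_seven] <;> ring

theorem chi_cyclic (x y z : V7) : chi x y z = chi y z x := by
  ext i; fin_cases i <;> simp [chi, starPhi0, Matrix.det_fin_four, PiLp.single_apply] <;> ring

theorem phi0_cyclic (x y z : V7) : phi0 ![x, y, z] = phi0 ![y, z, x] := by
  simp only [phi0, Matrix.det_fin_three, Matrix.of_apply, Matrix.cons_val', Matrix.cons_val,
    Matrix.cons_val_zero, Matrix.cons_val_one, Matrix.cons_val_fin_one, Fin.isValue]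
  ring

theorem cross_add_add_smul_add_smul_add_smul (u v w : V7) (a b c : ℝ) :
    cross (u + v + w) (a • u + b • v + c • w) =
      (b - a) • cross u v + (c - b) • cross v w + (a - c) • cross w u := by
  simp only [cross_add_left, cross_add_right, cross_smul_right, cross_self]
  rw [cross_anticomm v u, cross_anticomm w v, cross_anticomm u w]
  module

theorem cross_chi_self_left {x y z : V7} (hx : ‖x‖ = 1) (hxy : ⟪x, y⟫ = 0) (hxz : ⟪x, z⟫ = 0)
    (hφ : phi0 ![x, y, z] = 0) : cross x (chi x y z) = cross y z := by
  rw [chi_eq_cross_cross, hxy, hxz, zero_smul, zero_smul, sub_zero, zero_sub, cross_neg_right,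
    cross_cross_self, inner_cross_right, hφ, hx]
  simp

theorem cross_add_add_chi {u v w : V7} (h : Orthonormal ℝ ![u, v, w])
    (hφ : phi0 ![u, v, w] = 0) :
    cross (u + v + w) (chi u v w) = cross u v + cross v w + cross w u := by
  have unit (i : Fin 3) : ‖![u, v, w] i‖ = 1 := h.1 i
  have orth {i j : Fin 3} (hij : i ≠ j) : ⟪![u, v, w] i, ![u, v, w] j⟫ = 0 := h.2 hij
  have hu : cross u (chi u v w) = cross v w :=
    cross_chi_self_left (unit 0) (orth (by decide : (0 : Fin 3) ≠ 1))
      (orth (by decide : (0 : Fin 3) ≠ 2)) hφ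
  have hv : cross v (chi u v w) = cross w u := by
    rw [chi_cyclic]
    exact cross_chi_self_left (unit 1) (orth (by decide : (1 : Fin 3) ≠ 2))
      (orth (by decide : (1 : Fin 3) ≠ 0)) (by rwa [← phi0_cyclic])
  have hw : cross w (chi u v w) = cross u v := by
    rw [chi_cyclic, chi_cyclic]
    exact cross_chi_self_left (unit 2) (orth (by decide : (2 : Fin 3) ≠ 0))
      (orth (by decide : (2 : Fin 3) ≠ 1)) (by rwa [← phi0_cyclic, ← phi0_cyclic])
  rw [cross_add_left, cross_add_left, hu, hv, hw]
  abel

end G2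

/-- for a G₂-frame (u,v,w) and a+b+c=0:
√3 R″×(au+bv+cw) = (b−a)(u×v)+(c−b)(v×w)+(a−c)(w×u), and R″×R = R′. -/
theorem J_R_double_prime (u v w : V7) (h : Orthonormal ℝ ![u, v, w])
    (hφ : phi0 ![u, v, w] = 0) (R R' R'' : V7) (hR : R = chi u v w)
    (hR' : R' = (Real.sqrt 3)⁻¹ • (cross u v + cross v w + cross w u))
    (hR'' : R'' = (Real.sqrt 3)⁻¹ • (u + v + w)) :
    (∀ a b c : ℝ, a + b + c = 0 →
      Real.sqrt 3 • cross R'' (a • u + b • v + c • w) =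
        (b - a) • cross u v + (c - b) • cross v w + (a - c) • cross w u) ∧
    cross R'' R = R' := by
  subst hR hR' hR''
  refine ⟨fun a b c _ => ?_, ?_⟩
  · rw [G2.cross_smul_left, smul_smul, mul_inv_cancel₀ (by positivity), one_smul,
      G2.cross_add_add_smul_add_smul_add_smul]
  · rw [G2.cross_smul_left, G2.cross_add_add_chi h hφ]
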